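/- There exists a connected (42_3) geometric configuration Z = (P, L) of points and lines in ℝ³ such that the group of isometries of ℝ³ preserving Z equals Sym(T), the group of all isometries g of ℝ³ with g(V_T) = V_T, where V_T = {(1,1,1), (1,−1,−1), (−1,1,−1), (−1,−1,1)} is the vertex set of a regular tetrahedron. -/

import Mathlib

noncomputable section

/-- Euclidean 3-space. -/
abbrev E3 : Type := EuclideanSpace ℝ (Fin 3)

/-- The point (a, b, c) of ℝ³. -/
def pt (a b c : ℝ) : E3 := WithLp.toLp 2 ![a, b, c]

/-- The set of signs {-1, 1}. -/
def sgn : Set ℝ := {-1, 1}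

/-- The golden ratio φ = (1 + √5)/2. -/
def gr : ℝ := (1 + Real.sqrt 5) / 2

/-- Vertex set of a regular tetrahedron. -/
def VT : Set E3 := {pt 1 1 1, pt 1 (-1) (-1), pt (-1) 1 (-1), pt (-1) (-1) 1}

/-- Vertex set of a cube. -/
def VC : Set E3 := {p | ∃ a ∈ sgn, ∃ b ∈ sgn, ∃ c ∈ sgn, p = pt a b c}

/-- Vertex set of a regular octahedron. -/
def VO : Set E3 := {p | ∃ a ∈ sgn, p = pt a 0 0 ∨ p = pt 0 a 0 ∨ p = pt 0 0 a}

/-- Vertex set of a regular icosahedron. -/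
def VI : Set E3 :=
  {p | ∃ a ∈ sgn, ∃ b ∈ sgn,
    p = pt 0 a (b * gr) ∨ p = pt a (b * gr) 0 ∨ p = pt (a * gr) 0 b}

/-- Vertex set of a regular dodecahedron. -/
def VD : Set E3 :=
  {p | (∃ a ∈ sgn, ∃ b ∈ sgn, ∃ c ∈ sgn, p = pt a b c) ∨
    (∃ a ∈ sgn, ∃ b ∈ sgn,
      p = pt 0 (a / gr) (b * gr) ∨ p = pt (a / gr) (b * gr) 0 ∨ p = pt (b * gr) 0 (a / gr))}

/-- A line of ℝ³: a 1-dimensional affine subspace, viewed as a set of points. -/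
def IsLine (l : Set E3) : Prop :=
  ∃ p v : E3, v ≠ 0 ∧ l = {x | ∃ t : ℝ, x = p + t • v}

/-- A geometric configuration of points and lines in ℝ³: a finite set of points and a
finite set of lines such that two distinct lines contain at most one common point. -/
structure PLConfig where
  pts : Set E3
  lns : Set (Set E3)
  pts_finite : pts.Finite
  lns_finite : lns.Finite
  lns_line : ∀ l ∈ lns, IsLine l
  lines_meet : ∀ l₁ ∈ lns, ∀ l₂ ∈ lns, l₁ ≠ l₂ → (pts ∩ l₁ ∩ l₂).Subsingleton

/-- The valence of a point: the number of lines of the configuration through it. -/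
def PLConfig.pointValence (Z : PLConfig) (p : E3) : ℕ := {l ∈ Z.lns | p ∈ l}.ncard

/-- The valence of a line: the number of points of the configuration on it. -/
def PLConfig.lineValence (Z : PLConfig) (l : Set E3) : ℕ := (Z.pts ∩ l).ncard

/-- Adjacency in the Levi (incidence) graph of a configuration. -/
def PLConfig.LeviAdj (Z : PLConfig) : E3 ⊕ Set E3 → E3 ⊕ Set E3 → Prop
  | Sum.inl p, Sum.inr l => p ∈ Z.pts ∧ l ∈ Z.lns ∧ p ∈ l
  | Sum.inr l, Sum.inl p => p ∈ Z.pts ∧ l ∈ Z.lns ∧ p ∈ l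
  | _, _ => False

/-- Vertices of the Levi graph of a configuration. -/
def PLConfig.LeviVert (Z : PLConfig) : E3 ⊕ Set E3 → Prop
  | Sum.inl p => p ∈ Z.pts
  | Sum.inr l => l ∈ Z.lns

/-- A configuration is connected if its Levi graph is connected. -/
def PLConfig.Connected (Z : PLConfig) : Prop :=
  ∀ a b, Z.LeviVert a → Z.LeviVert b → Relation.ReflTransGen Z.LeviAdj a b

/-- A balanced (n_k) configuration: n points and n lines, all k-valent. -/
def PLConfig.IsBalanced (Z : PLConfig) (n k : ℕ) : Prop :=
  Z.pts.ncard = n ∧ Z.lns.ncard = n ∧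
    (∀ p ∈ Z.pts, Z.pointValence p = k) ∧ (∀ l ∈ Z.lns, Z.lineValence l = k)

/-- A (p_q, n_k) configuration: p q-valent points and n k-valent lines. -/
def PLConfig.IsConfig (Z : PLConfig) (p q n k : ℕ) : Prop :=
  Z.pts.ncard = p ∧ Z.lns.ncard = n ∧
    (∀ x ∈ Z.pts, Z.pointValence x = q) ∧ (∀ l ∈ Z.lns, Z.lineValence l = k)

/-- An isometry of ℝ³ preserves a configuration if it maps its point set onto itself
and maps every line of the configuration onto a line of the configuration. -/
def Preserves (g : E3 ≃ᵢ E3) (Z : PLConfig) : Prop :=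
  g '' Z.pts = Z.pts ∧ ∀ l ∈ Z.lns, g '' l ∈ Z.lns

/-- An isometry of ℝ³ is orientation-preserving if it is the composition of a linear
isometry of determinant 1 with a translation. -/
def OrientationPreserving (g : E3 ≃ᵢ E3) : Prop :=
  ∃ (f : E3 ≃ₗᵢ[ℝ] E3) (b : E3),
    LinearMap.det (f.toLinearEquiv : E3 →ₗ[ℝ] E3) = 1 ∧ ∀ x, g x = f x + b


/-! ### Auxiliary development -/

section Aux
set_option maxRecDepth 40000

/-- Integer model of points of ℝ³. -/
abbrev V3 : Type := ℤ × ℤ × ℤ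

/-- Realization of a model point. -/
def rp (v : V3) : E3 := pt (v.1 : ℝ) (v.2.1 : ℝ) (v.2.2 : ℝ)

lemma pt_apply0 (a b c : ℝ) : pt a b c 0 = a := rfl
lemma pt_apply1 (a b c : ℝ) : pt a b c 1 = b := rfl
lemma pt_apply2 (a b c : ℝ) : pt a b c 2 = c := rfl
lemma add_apply' (x y : E3) (i : Fin 3) : (x + y) i = x i + y i := rfl
lemma smul_apply' (t : ℝ) (x : E3) (i : Fin 3) : (t • x) i = t * x i := rfl

lemma E3_ext {x y : E3} (h0 : x 0 = y 0) (h1 : x 1 = y 1) (h2 : x 2 = y 2) : x = y := by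
  apply PiLp.ext; intro i; fin_cases i <;> assumption

lemma rp_inj : Function.Injective rp := by
  rintro ⟨a, b, c⟩ ⟨d, e, f⟩ h
  have h0 := congrArg (fun x : E3 => x 0) h
  have h1 := congrArg (fun x : E3 => x 1) h
  have h2 := congrArg (fun x : E3 => x 2) h
  simp only [rp, pt_apply0, pt_apply1, pt_apply2, Int.cast_injective.eq_iff] at h0 h1 h2
  simp_all

lemma rp_zero : rp 0 = 0 := by
  apply E3_ext <;> simp [rp, pt_apply0, pt_apply1, pt_apply2]

lemma rp_add (u v : V3) : rp (u + v) = rp u + rp v := by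
  apply E3_ext <;> simp [rp, add_apply', pt_apply0, pt_apply1, pt_apply2] <;> push_cast <;> ring

/-- `rp` as an additive monoid homomorphism. -/
def rpHom : V3 →+ E3 := AddMonoidHom.mk' rp rp_add

lemma rp_ne_zero {d : V3} (hd : d ≠ 0) : rp d ≠ 0 := fun h => hd (rp_inj (h.trans rp_zero.symm))

/-- Cross product on the model. -/
def cross (u v : V3) : V3 :=
  (u.2.1 * v.2.2 - u.2.2 * v.2.1, u.2.2 * v.1 - u.1 * v.2.2, u.1 * v.2.1 - u.2.1 * v.1)

/-- The line of ℝ³ through `rp b` with direction `rp d`. -/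
def lset (b d : V3) : Set E3 := {x | ∃ t : ℝ, x = rp b + t • rp d}

lemma V3_ne_zero {d : V3} (hd : d ≠ 0) : d.1 ≠ 0 ∨ d.2.1 ≠ 0 ∨ d.2.2 ≠ 0 := by
  obtain ⟨d1, d2, d3⟩ := d
  by_contra h
  push_neg at h
  refine hd ?_
  have h1 : d1 = 0 := h.1
  have h2 : d2 = 0 := h.2.1
  have h3 : d3 = 0 := h.2.2
  subst h1; subst h2; subst h3; rfl

lemma mem_lset_iff {q b d : V3} (hd : d ≠ 0) : rp q ∈ lset b d ↔ cross (q - b) d = 0 := by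
  obtain ⟨q1, q2, q3⟩ := q; obtain ⟨b1, b2, b3⟩ := b; obtain ⟨d1, d2, d3⟩ := d
  have hsub : ((q1,q2,q3) : V3) - (b1,b2,b3) = (q1-b1, q2-b2, q3-b3) := rfl
  rw [hsub]
  constructor
  · rintro ⟨t, ht⟩
    have h0 := congrArg (fun x : E3 => x 0) ht
    have h1 := congrArg (fun x : E3 => x 1) ht
    have h2 := congrArg (fun x : E3 => x 2) ht
    simp only [rp, add_apply', smul_apply', pt_apply0, pt_apply1, pt_apply2] at h0 h1 h2
    have e1 : ((q2 - b2) * d3 - (q3 - b3) * d2 : ℤ) = 0 := by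
      have : (((q2 - b2) * d3 - (q3 - b3) * d2 : ℤ) : ℝ) = 0 := by push_cast; rw [h1, h2]; ring
      exact_mod_cast this
    have e2 : ((q3 - b3) * d1 - (q1 - b1) * d3 : ℤ) = 0 := by
      have : (((q3 - b3) * d1 - (q1 - b1) * d3 : ℤ) : ℝ) = 0 := by push_cast; rw [h0, h2]; ring
      exact_mod_cast this
    have e3 : ((q1 - b1) * d2 - (q2 - b2) * d1 : ℤ) = 0 := by
      have : (((q1 - b1) * d2 - (q2 - b2) * d1 : ℤ) : ℝ) = 0 := by push_cast; rw [h0, h1]; ring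
      exact_mod_cast this
    simp only [cross, Prod.ext_iff]
    exact ⟨e1, e2, e3⟩
  · intro hc
    simp only [cross, Prod.ext_iff] at hc
    obtain ⟨e1, e2, e3⟩ := hc
    have e1R : (((q2:ℝ) - b2) * d3 - ((q3:ℝ) - b3) * d2) = 0 := by exact_mod_cast congrArg (fun z : ℤ => (z : ℝ)) e1
    have e2R : (((q3:ℝ) - b3) * d1 - ((q1:ℝ) - b1) * d3) = 0 := by exact_mod_cast congrArg (fun z : ℤ => (z : ℝ)) e2
    have e3R : (((q1:ℝ) - b1) * d2 - ((q2:ℝ) - b2) * d1) = 0 := by exact_mod_cast congrArg (fun z : ℤ => (z : ℝ)) e3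
    rcases V3_ne_zero hd with h | h | h
    · have hR : ((d1:ℤ) : ℝ) ≠ 0 := by exact_mod_cast h
      refine ⟨((q1:ℝ) - b1) / d1, ?_⟩
      apply E3_ext <;>
        simp only [rp, add_apply', smul_apply', pt_apply0, pt_apply1, pt_apply2] <;>
        field_simp <;> linarith [e1R, e2R, e3R]
    · have hR : ((d2:ℤ) : ℝ) ≠ 0 := by exact_mod_cast h
      refine ⟨((q2:ℝ) - b2) / d2, ?_⟩
      apply E3_ext <;>
        simp only [rp, add_apply', smul_apply', pt_apply0, pt_apply1, pt_apply2] <;>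
        field_simp <;> linarith [e1R, e2R, e3R]
    · have hR : ((d3:ℤ) : ℝ) ≠ 0 := by exact_mod_cast h
      refine ⟨((q3:ℝ) - b3) / d3, ?_⟩
      apply E3_ext <;>
        simp only [rp, add_apply', smul_apply', pt_apply0, pt_apply1, pt_apply2] <;>
        field_simp <;> linarith [e1R, e2R, e3R]

lemma lset_param {b' d' : V3} (hd' : d' ≠ 0) {β δ : E3} {c u : ℝ} (hc : c ≠ 0)
    (hδ : δ = c • rp d') (hβ : β = rp b' + u • rp d') :
    {x : E3 | ∃ s : ℝ, x = β + s • δ} = lset b' d' := by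
  subst hδ; subst hβ
  ext x
  constructor
  · rintro ⟨s, rfl⟩
    exact ⟨u + s * c, by module⟩
  · rintro ⟨s, rfl⟩
    refine ⟨(s - u) / c, ?_⟩
    match_scalars
    · ring
    · field_simp <;> ring

lemma isline_two_points {l : Set E3} (hl : IsLine l) {x y : E3} (hx : x ∈ l) (hy : y ∈ l)
    (hxy : x ≠ y) : l = {z : E3 | ∃ s : ℝ, z = x + s • (y - x)} := by
  obtain ⟨p, v, hv, rfl⟩ := hl
  obtain ⟨a, rfl⟩ := hx
  obtain ⟨b, rfl⟩ := hy
  have hab : (b : ℝ) - a ≠ 0 := by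
    intro h
    apply hxy
    have : b = a := by linarith [sub_eq_zero.1 h]
    rw [this]
  ext z
  constructor
  · rintro ⟨t, rfl⟩
    refine ⟨(t - a) / (b - a), ?_⟩
    match_scalars
    · ring
    · field_simp <;> ring
  · rintro ⟨s, rfl⟩
    exact ⟨a + s * (b - a), by match_scalars <;> ring⟩

lemma meet_subsingleton (S : Set E3) {l₁ l₂ : Set E3} (h1 : IsLine l₁) (h2 : IsLine l₂)
    (hne : l₁ ≠ l₂) : (S ∩ l₁ ∩ l₂).Subsingleton := by
  intro x hx y hy
  by_contra hxy
  apply hne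
  rw [isline_two_points h1 hx.1.2 hy.1.2 hxy, isline_two_points h2 hx.2 hy.2 hxy]

/-! ### The configuration data -/

def Plist : List V3 := [(-4, -4, -4), (-4, 4, 4), (-3, -2, -2), (-3, 0, 0), (-3, 2, 2), (-2, -3, -2), (-2, -2, -3), (-2, -2, -2), (-2, -2, -1), (-2, -1, -2), (-2, 1, 2), (-2, 2, 1), (-2, 2, 2), (-2, 2, 3), (-2, 3, 2), (-1, -2, -2), (-1, -1, 1), (-1, 1, -1), (-1, 2, 2), (0, -3, 0), (0, 0, -3), (0, 0, 3), (0, 3, 0), (1, -2, 2), (1, -1, -1), (1, 1, 1), (1, 2, -2), (2, -3, 2), (2, -2, 1), (2, -2, 2), (2, -2, 3), (2, -1, 2), (2, 1, -2), (2, 2, -3), (2, 2, -2), (2, 2, -1), (2, 3, -2), (3, -2, 2), (3, 0, 0), (3, 2, -2), (4, -4, 4), (4, 4, -4)]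

def Blist : List V3 := [(-2, 2, 1), (-4, 4, 4), (-4, -4, -4), (1, -2, 2), (-4, 4, 4), (-2, 1, 2), (-4, -4, -4), (1, 2, -2), (-4, 4, 4), (-2, -2, -1), (-4, -4, -4), (-2, -1, -2), (-3, -2, -2), (-2, 3, 2), (-2, 2, 3), (-2, -2, -3), (-2, -3, -2), (3, -2, 2), (2, 1, -2), (2, 2, -3), (1, -2, 2), (-2, -3, -2), (-2, 1, 2), (2, -2, 1), (-2, -2, -3), (-3, 2, 2), (-2, 2, 1), (1, 2, -2), (2, -3, 2), (-3, -2, -2), (-2, 1, 2), (0, 0, -3), (-3, 0, 0), (-2, 2, 1), (0, 3, 0), (0, -3, 0), (-3, 0, 0), (0, 0, 3), (-2, -2, -1), (-2, -1, -2), (-1, 2, 2), (-1, -2, -2)]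

def Dlist : List V3 := [(4, -4, 2), (2, -1, -2), (1, 2, 2), (2, 4, -4), (1, -2, -2), (4, 2, -4), (2, 1, 2), (2, -4, 4), (2, -2, -1), (4, 4, -2), (2, 2, 1), (4, -2, 4), (0, 2, 2), (2, 0, -2), (2, -2, 0), (2, 2, 0), (2, 0, 2), (0, 2, -2), (0, 1, 0), (0, 0, 1), (1, 0, 0), (0, 1, 0), (0, 1, 0), (0, 0, 1), (0, 0, 1), (1, 0, 0), (0, 0, 1), (1, 0, 0), (0, 1, 0), (1, 0, 0), (1, -2, -1), (1, -1, 2), (2, 1, -1), (1, -1, -2), (1, -2, 1), (1, 2, -1), (2, -1, 1), (1, 1, -2), (1, 1, 2), (1, 2, 1), (2, -1, -1), (2, 1, 1)]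

def Tlist : List (Fin 42 × Fin 42 × Fin 42) := [(11, 30, 40), (1, 14, 32), (0, 2, 18), (23, 39, 41), (1, 4, 15), (10, 36, 41), (0, 5, 31), (26, 37, 40), (1, 13, 28), (8, 33, 41), (0, 6, 35), (9, 27, 40), (2, 3, 4), (14, 22, 36), (13, 21, 30), (6, 20, 33), (5, 19, 27), (37, 38, 39), (32, 34, 36), (33, 34, 35), (23, 29, 37), (5, 7, 9), (10, 12, 14), (28, 29, 30), (6, 7, 8), (4, 12, 18), (11, 12, 13), (26, 34, 39), (27, 29, 31), (2, 7, 15), (10, 16, 19), (20, 24, 28), (3, 17, 26), (11, 17, 20), (22, 25, 31), (19, 24, 32), (3, 16, 23), (21, 25, 35), (8, 16, 21), (9, 17, 22), (18, 25, 38), (15, 24, 38)]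

def Llist : List (Fin 42 × Fin 42 × Fin 42) := [(2, 6, 10), (1, 4, 8), (2, 12, 29), (12, 32, 36), (4, 12, 25), (6, 16, 21), (10, 15, 24), (21, 24, 29), (9, 24, 38), (11, 21, 39), (5, 22, 30), (0, 26, 33), (22, 25, 26), (8, 14, 26), (1, 13, 22), (4, 29, 41), (30, 36, 38), (32, 33, 39), (2, 25, 40), (16, 30, 35), (15, 31, 33), (14, 37, 38), (13, 34, 39), (3, 20, 36), (31, 35, 41), (34, 37, 40), (7, 27, 32), (11, 16, 28), (8, 23, 31), (20, 23, 28), (0, 14, 23), (6, 28, 34), (1, 18, 35), (9, 15, 19), (18, 19, 27), (10, 19, 37), (5, 13, 18), (7, 17, 20), (17, 40, 41), (3, 17, 27), (0, 7, 11), (3, 5, 9)]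

def tripsList : List (Fin 4 × Fin 4 × Fin 4) := [(0, 1, 2), (0, 1, 3), (0, 2, 1), (0, 2, 3), (0, 3, 1), (0, 3, 2), (1, 0, 2), (1, 0, 3), (1, 2, 0), (1, 2, 3), (1, 3, 0), (1, 3, 2), (2, 0, 1), (2, 0, 3), (2, 1, 0), (2, 1, 3), (2, 3, 0), (2, 3, 1), (3, 0, 1), (3, 0, 2), (3, 1, 0), (3, 1, 2), (3, 2, 0), (3, 2, 1)]

def permPlist : List (List (Fin 42)) := [[0, 1, 2, 3, 4, 5, 6, 7, 8, 9, 10, 11, 12, 13, 14, 15, 16, 17, 18, 19, 20, 21, 22, 23, 24, 25, 26, 27, 28, 29, 30, 31, 32, 33, 34, 35, 36, 37, 38, 39, 40, 41], [0, 1, 2, 3, 4, 6, 5, 7, 9, 8, 11, 10, 12, 14, 13, 15, 17, 16, 18, 20, 19, 22, 21, 26, 24, 25, 23, 33, 32, 34, 36, 35, 28, 27, 29, 31, 30, 39, 38, 37, 41, 40], [0, 40, 5, 19, 27, 2, 6, 7, 8, 15, 23, 28, 29, 30, 37, 9, 16, 24, 31, 3, 20, 21, 38, 10, 17, 25, 32,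 4, 11, 12, 13, 18, 26, 33, 34, 35, 39, 14, 22, 36, 1, 41], [0, 40, 5, 19, 27, 6, 2, 7, 15, 8, 28, 23, 29, 37, 30, 9, 24, 16, 31, 20, 3, 38, 21, 32, 17, 25, 10, 33, 26, 34, 39, 35, 11, 4, 12, 18, 13, 36, 22, 14, 41, 1], [0, 41, 6, 20, 33, 2, 5, 7, 9, 15, 26, 32, 34, 36, 39, 8, 17, 24, 35, 3, 19, 22, 38, 11, 16, 25, 28, 4, 10, 12, 14, 18, 23, 27, 29, 31, 37, 13, 21, 30, 1, 40], [0, 41, 6, 20, 33, 5, 2, 7, 15, 9, 32, 26, 34, 39, 36, 8, 24, 17, 35, 19, 3, 38, 22, 28, 16, 25, 11, 27, 23, 29, 37, 31, 10, 4, 12, 18, 14, 30, 21, 13, 40, 1], [1, 0, 4, 3, 2, 13, 14, 12, 10, 11, 8, 9, 7, 5, 6, 18, 16, 17, 15, 21, 22, 19, 20, 23, 25, 24, 26, 30, 31, 29, 27, 28, 35, 36, 34, 32, 33, 37, 38, 39, 40, 41], [1, 0, 4, 3, 2, 14, 13, 12, 11, 10, 9, 8, 7, 6, 5, 18, 17,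 16, 15, 22, 21, 20, 19, 26, 25, 24, 23, 36, 35, 34, 33, 32, 31, 30, 29, 28, 27, 39, 38, 37, 41, 40], [1, 40, 13, 21, 30, 4, 14, 12, 10, 18, 23, 31, 29, 27, 37, 11, 16, 25, 28, 3, 22, 19, 38, 8, 17, 24, 35, 2, 9, 7, 5, 15, 26, 36, 34, 32, 39, 6, 20, 33, 0, 41], [1, 40, 13, 21, 30, 14, 4, 12, 18, 10, 31, 23, 29, 37, 27, 11, 25, 16, 28, 22, 3, 38, 19, 35, 17, 24, 8, 36, 26, 34, 39, 32, 9, 2, 7, 15, 5, 33, 20, 6, 41, 0], [1, 41, 14, 22, 36, 4, 13, 12, 11, 18, 26, 35, 34, 33, 39, 10, 17, 25, 32, 3, 21, 20, 38, 9, 16, 24, 31, 2, 8, 7, 6, 15, 23, 30, 29, 28, 37, 5, 19, 27, 0, 40], [1, 41, 14, 22, 36, 13, 4, 12, 18, 11, 35, 26, 34, 39, 33, 10, 25, 17, 32, 21, 3, 38, 20, 31, 16, 24, 9, 30, 23, 29, 37, 28, 8, 2, 7, 15, 6, 27, 19, 5, 40, 0], [40, 0, 27, 19, 5, 30, 37,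 29, 23, 28, 8, 15, 7, 2, 6, 31, 16, 24, 9, 21, 38, 3, 20, 10, 25, 17, 32, 13, 18, 12, 4, 11, 35, 39, 34, 26, 33, 14, 22, 36, 1, 41], [40, 0, 27, 19, 5, 37, 30, 29, 28, 23, 15, 8, 7, 6, 2, 31, 24, 16, 9, 38, 21, 20, 3, 32, 25, 17, 10, 39, 35, 34, 33, 26, 18, 13, 12, 11, 4, 36, 22, 14, 41, 1], [40, 1, 30, 21, 13, 27, 37, 29, 23, 31, 10, 18, 12, 4, 14, 28, 16, 25, 11, 19, 38, 3, 22, 8, 24, 17, 35, 5, 15, 7, 2, 9, 32, 39, 34, 26, 36, 6, 20, 33, 0, 41], [40, 1, 30, 21, 13, 37, 27, 29, 31, 23, 18, 10, 12, 14, 4, 28, 25, 16, 11, 38, 19, 22, 3, 35, 24, 17, 8, 39, 32, 34, 36, 26, 15, 5, 7, 9, 2, 33, 20, 6, 41, 0], [40, 41, 37, 38, 39, 27, 30, 29, 28, 31, 32, 35, 34, 33, 36, 23, 24, 25, 26, 19, 21, 20, 22, 15, 16, 17, 18, 5, 8, 7, 6, 9, 10, 13, 12, 11, 14, 2, 3,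 4, 0, 1], [40, 41, 37, 38, 39, 30, 27, 29, 31, 28, 35, 32, 34, 36, 33, 23, 25, 24, 26, 21, 19, 22, 20, 18, 16, 17, 15, 13, 10, 12, 14, 11, 8, 5, 7, 9, 6, 4, 3, 2, 1, 0], [41, 0, 33, 20, 6, 36, 39, 34, 26, 32, 9, 15, 7, 2, 5, 35, 17, 24, 8, 22, 38, 3, 19, 11, 25, 16, 28, 14, 18, 12, 4, 10, 31, 37, 29, 23, 27, 13, 21, 30, 1, 40], [41, 0, 33, 20, 6, 39, 36, 34, 32, 26, 15, 9, 7, 5, 2, 35, 24, 17, 8, 38, 22, 19, 3, 28, 25, 16, 11, 37, 31, 29, 27, 23, 18, 14, 12, 10, 4, 30, 21, 13, 40, 1], [41, 1, 36, 22, 14, 33, 39, 34, 26, 35, 11, 18, 12, 4, 13, 32, 17, 25, 10, 20, 38, 3, 21, 9, 24, 16, 31, 6, 15, 7, 2, 8, 28, 37, 29, 23, 30, 5, 19, 27, 0, 40], [41, 1, 36, 22, 14, 39, 33, 34, 35, 26, 18, 11, 12, 13, 4, 32, 25, 17, 10, 38, 20, 21, 3, 31, 24, 16, 9, 37, 28,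 29, 30, 23, 15, 6, 7, 8, 2, 27, 19, 5, 40, 0], [41, 40, 39, 38, 37, 33, 36, 34, 32, 35, 28, 31, 29, 27, 30, 26, 24, 25, 23, 20, 22, 19, 21, 15, 17, 16, 18, 6, 9, 7, 5, 8, 11, 14, 12, 10, 13, 2, 3, 4, 0, 1], [41, 40, 39, 38, 37, 36, 33, 34, 35, 32, 31, 28, 29, 30, 27, 26, 25, 24, 23, 22, 20, 21, 19, 18, 17, 16, 15, 14, 11, 12, 13, 10, 9, 6, 7, 8, 5, 4, 3, 2, 1, 0]]

def permLlist : List (List (Fin 42)) := [[0, 1, 2, 3, 4, 5, 6, 7, 8, 9, 10, 11, 12, 13, 14, 15, 16, 17, 18, 19, 20, 21, 22, 23, 24, 25, 26, 27, 28, 29, 30, 31, 32, 33, 34, 35, 36, 37, 38, 39, 40, 41], [5, 8, 2, 7, 4, 0, 10, 3, 1, 11, 6, 9, 12, 14, 13, 16, 15, 17, 23, 28, 27, 24, 26, 18, 21, 25, 22, 20, 19, 29, 33, 35, 36, 30, 37, 31, 32, 34, 39, 38, 40, 41], [8, 7, 6, 5, 11, 3, 2, 1, 0, 9, 10, 4,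 16, 17, 14, 15, 12, 13, 27, 19, 22, 29, 20, 26, 24, 28, 23, 18, 25, 21, 36, 33, 35, 31, 40, 32, 30, 37, 38, 41, 34, 39], [3, 0, 6, 1, 11, 8, 10, 5, 7, 4, 2, 9, 16, 14, 17, 12, 15, 13, 26, 25, 18, 24, 23, 27, 29, 28, 20, 22, 19, 21, 31, 32, 30, 36, 37, 33, 35, 40, 41, 38, 34, 39], [1, 3, 10, 0, 9, 7, 2, 8, 5, 11, 6, 4, 15, 17, 13, 16, 12, 14, 20, 28, 26, 29, 27, 22, 21, 19, 18, 23, 25, 24, 32, 30, 31, 35, 40, 36, 33, 34, 39, 41, 37, 38], [7, 5, 10, 8, 9, 1, 6, 0, 3, 4, 2, 11, 15, 13, 17, 12, 16, 14, 22, 25, 23, 21, 18, 20, 29, 19, 27, 26, 28, 24, 35, 36, 33, 32, 34, 30, 31, 40, 41, 39, 37, 38], [11, 10, 4, 3, 2, 9, 8, 7, 6, 5, 1, 0, 12, 15, 16, 13, 14, 17, 19, 18, 20, 26, 24, 28, 22, 29, 21, 27, 23, 25, 38, 34, 32, 39, 31, 37, 36, 35, 30, 33, 41, 40], [9, 6,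 4, 7, 2, 11, 1, 3, 10, 0, 8, 5, 12, 16, 15, 14, 13, 17, 28, 23, 27, 22, 21, 19, 26, 29, 24, 20, 18, 25, 39, 37, 36, 38, 35, 34, 32, 31, 33, 30, 41, 40], [6, 7, 8, 9, 0, 3, 4, 10, 11, 5, 1, 2, 14, 17, 16, 13, 12, 15, 27, 18, 24, 25, 20, 21, 22, 23, 28, 19, 29, 26, 36, 39, 37, 34, 41, 32, 38, 35, 30, 40, 31, 33], [3, 11, 8, 10, 0, 6, 1, 9, 7, 2, 4, 5, 14, 16, 17, 12, 13, 15, 21, 29, 19, 22, 28, 27, 25, 23, 20, 24, 18, 26, 34, 32, 38, 36, 35, 39, 37, 41, 40, 30, 31, 33], [10, 3, 1, 11, 5, 7, 4, 6, 9, 0, 8, 2, 13, 17, 15, 14, 12, 16, 20, 23, 21, 25, 27, 24, 26, 18, 19, 28, 29, 22, 32, 38, 34, 37, 41, 36, 39, 31, 33, 40, 35, 30], [7, 9, 1, 6, 5, 10, 8, 11, 3, 2, 4, 0, 13, 15, 17, 12, 14, 16, 24, 29, 28, 26, 19, 20, 25, 18, 27, 21, 23, 22, 37, 36, 39, 32,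 31, 38, 34, 41, 40, 33, 35, 30], [4, 10, 11, 5, 6, 9, 0, 1, 2, 3, 7, 8, 16, 15, 12, 17, 14, 13, 19, 27, 22, 23, 24, 25, 20, 21, 29, 18, 26, 28, 38, 40, 35, 41, 33, 37, 30, 32, 36, 31, 39, 34], [9, 2, 11, 1, 6, 4, 7, 5, 10, 8, 0, 3, 16, 12, 15, 14, 17, 13, 25, 26, 18, 20, 29, 19, 23, 21, 24, 22, 27, 28, 41, 37, 30, 38, 32, 40, 35, 33, 31, 36, 39, 34], [2, 1, 0, 9, 8, 5, 11, 10, 4, 3, 7, 6, 14, 13, 12, 17, 16, 15, 18, 27, 24, 28, 22, 29, 20, 26, 25, 19, 21, 23, 30, 41, 37, 40, 39, 35, 38, 32, 36, 34, 33, 31], [5, 4, 0, 10, 8, 2, 7, 9, 1, 6, 11, 3, 14, 12, 13, 16, 17, 15, 29, 21, 19, 20, 25, 18, 28, 26, 22, 24, 27, 23, 40, 35, 38, 30, 32, 41, 37, 39, 34, 36, 33, 31], [10, 5, 7, 4, 3, 1, 11, 2, 9, 8, 0, 6, 17, 13, 15, 14, 16, 12, 22, 26, 29, 28, 18, 24,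 23, 27, 19, 25, 21, 20, 35, 38, 40, 37, 39, 30, 41, 33, 31, 34, 32, 36], [1, 9, 7, 2, 3, 10, 0, 4, 5, 6, 11, 8, 17, 15, 13, 16, 14, 12, 24, 21, 25, 23, 19, 22, 28, 27, 18, 29, 26, 20, 37, 30, 41, 35, 33, 38, 40, 39, 34, 31, 32, 36], [4, 6, 9, 0, 10, 11, 5, 8, 2, 7, 3, 1, 15, 16, 12, 17, 13, 14, 28, 20, 26, 18, 21, 25, 27, 24, 29, 23, 22, 19, 39, 40, 31, 41, 30, 34, 33, 36, 32, 35, 38, 37], [11, 2, 9, 8, 10, 4, 3, 0, 6, 1, 5, 7, 15, 12, 16, 13, 17, 14, 25, 22, 23, 27, 29, 28, 18, 24, 21, 26, 20, 19, 41, 34, 33, 39, 36, 40, 31, 30, 35, 32, 38, 37], [2, 8, 5, 11, 1, 0, 9, 6, 4, 7, 3, 10, 13, 14, 12, 17, 15, 16, 23, 20, 21, 19, 26, 29, 27, 22, 25, 28, 24, 18, 33, 41, 34, 40, 38, 31, 39, 36, 32, 37, 30, 35], [0, 4, 5, 6, 1, 2, 3, 11, 8, 10, 9, 7, 13, 12,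 14, 15, 17, 16, 29, 24, 28, 27, 25, 23, 19, 22, 26, 21, 20, 18, 40, 31, 39, 33, 36, 41, 34, 38, 37, 32, 30, 35], [6, 0, 3, 4, 7, 8, 9, 2, 11, 1, 5, 10, 17, 14, 16, 13, 15, 12, 26, 22, 29, 19, 23, 21, 18, 20, 28, 25, 24, 27, 31, 39, 40, 34, 38, 33, 41, 30, 35, 37, 36, 32], [8, 11, 3, 2, 7, 6, 5, 4, 0, 10, 9, 1, 17, 16, 14, 15, 13, 12, 21, 24, 25, 18, 28, 26, 19, 20, 23, 29, 22, 27, 34, 33, 41, 31, 30, 39, 40, 38, 37, 35, 36, 32]]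


def Pm (k : Fin 42) : V3 := Plist.getD k.val 0
def Bm (j : Fin 42) : V3 := Blist.getD j.val 0
def Dm (j : Fin 42) : V3 := Dlist.getD j.val 0
def Tm (j : Fin 42) : Fin 42 × Fin 42 × Fin 42 := Tlist.getD j.val default
def Lm (k : Fin 42) : Fin 42 × Fin 42 × Fin 42 := Llist.getD k.val default
def inc (k j : Fin 42) : Prop := cross (Pm k - Bm j) (Dm j) = 0
instance incDec (k j : Fin 42) : Decidable (inc k j) := inferInstanceAs (Decidable (_ = _))

def dbl (v : V3) : V3 := (2 * v.1, 2 * v.2.1, 2 * v.2.2)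
def zs (a : ℤ) (v : V3) : V3 := (a * v.1, a * v.2.1, a * v.2.2)
def vadd3 (u v w : V3) : V3 :=
  (u.1 + v.1 + w.1, u.2.1 + v.2.1 + w.2.1, u.2.2 + v.2.2 + w.2.2)
def VTm (i : Fin 4) : V3 := [((1:ℤ),(1:ℤ),(1:ℤ)), (1,-1,-1), (-1,1,-1), (-1,-1,1)].getD i.val 0
def Mq2 (u1 u2 u3 q : V3) : V3 :=
  vadd3 (zs (q.1 + q.2.1) u1) (zs (q.1 - q.2.2) u2) (zs (q.2.1 - q.2.2) u3)
def trips (t : Fin 24) : Fin 4 × Fin 4 × Fin 4 := tripsList.getD t.val default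
def permP (t : Fin 24) (k : Fin 42) : Fin 42 := (permPlist.getD t.val []).getD k.val 0
def permL (t : Fin 24) (j : Fin 42) : Fin 42 := (permLlist.getD t.val []).getD j.val 0
def Mt (t : Fin 24) (q : V3) : V3 := Mq2 (VTm (trips t).1) (VTm (trips t).2.1) (VTm (trips t).2.2) q
def nsq (v : V3) : ℤ := v.1 * v.1 + v.2.1 * v.2.1 + v.2.2 * v.2.2

lemma D_inc : ∀ k j : Fin 42, inc k j ↔ (k = (Tm j).1 ∨ k = (Tm j).2.1 ∨ k = (Tm j).2.2) := by decide
lemma D_P_inj : ∀ k k' : Fin 42, Pm k = Pm k' → k = k' := by decide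
lemma D_D_ne : ∀ j : Fin 42, Dm j ≠ 0 := by decide
lemma D_TL : ∀ k j : Fin 42, (k = (Tm j).1 ∨ k = (Tm j).2.1 ∨ k = (Tm j).2.2) ↔
    (j = (Lm k).1 ∨ j = (Lm k).2.1 ∨ j = (Lm k).2.2) := by decide
lemma D_T_sorted : ∀ j : Fin 42, (Tm j).1 < (Tm j).2.1 ∧ (Tm j).2.1 < (Tm j).2.2 := by decide
lemma D_L_sorted : ∀ k : Fin 42, (Lm k).1 < (Lm k).2.1 ∧ (Lm k).2.1 < (Lm k).2.2 := by decide
lemma D_lines_distinct : ∀ j j' : Fin 42, j ≠ j' →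
    ((¬((Tm j).1 = (Tm j').1 ∨ (Tm j).1 = (Tm j').2.1 ∨ (Tm j).1 = (Tm j').2.2)) ∨
     (¬((Tm j).2.1 = (Tm j').1 ∨ (Tm j).2.1 = (Tm j').2.1 ∨ (Tm j).2.1 = (Tm j').2.2)) ∨
     (¬((Tm j).2.2 = (Tm j').1 ∨ (Tm j).2.2 = (Tm j').2.1 ∨ (Tm j).2.2 = (Tm j').2.2))) := by decide
lemma D_shell : ∀ k : Fin 42, nsq (Pm k) = 3 ↔ (k = 16 ∨ k = 17 ∨ k = 24 ∨ k = 25) := by decide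
lemma D_sum : (Finset.univ.sum fun k : Fin 42 => Pm k) = 0 := by decide
lemma D_VT_sum : (Finset.univ.sum fun i : Fin 4 => VTm i) = 0 := by decide
lemma D_VT_inj : ∀ i i' : Fin 4, VTm i = VTm i' → i = i' := by decide
lemma D_VT_P : Pm 25 = VTm 0 ∧ Pm 24 = VTm 1 ∧ Pm 17 = VTm 2 ∧ Pm 16 = VTm 3 := by decide
lemma D_VT_nsq : ∀ i : Fin 4, nsq (VTm i) = 3 := by decide
lemma D_trips_cover : ∀ i1 i2 i3 : Fin 4, i1 ≠ i2 → i1 ≠ i3 → i2 ≠ i3 →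
    ∃ t : Fin 24, trips t = (i1, i2, i3) := by decide
lemma D_permP : ∀ t : Fin 24, ∀ k : Fin 42, Mt t (Pm k) = dbl (Pm (permP t k)) := by decide
lemma D_permL : ∀ t : Fin 24, ∀ j : Fin 42,
    Mt t (Dm j) ≠ 0 ∧
    cross (Mt t (Dm j)) (Dm (permL t j)) = 0 ∧
    cross (Mt t (Bm j) - dbl (Bm (permL t j))) (Dm (permL t j)) = 0 := by decide

/-! ### The configuration -/

def LS (j : Fin 42) : Set E3 := lset (Bm j) (Dm j)

lemma memLS {k j : Fin 42} : rp (Pm k) ∈ LS j ↔ inc k j := mem_lset_iff (D_D_ne j)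

lemma LS_isline (j : Fin 42) : IsLine (LS j) :=
  ⟨rp (Bm j), rp (Dm j), rp_ne_zero (D_D_ne j), rfl⟩

lemma LS_inj : Function.Injective LS := by
  intro j j' h
  by_contra hne
  have hd := D_lines_distinct j j' hne
  have key : ∀ k : Fin 42, (k = (Tm j).1 ∨ k = (Tm j).2.1 ∨ k = (Tm j).2.2) →
      (k = (Tm j').1 ∨ k = (Tm j').2.1 ∨ k = (Tm j').2.2) := by
    intro k hk
    have h1 : inc k j := (D_inc k j).2 hk
    have h2 : rp (Pm k) ∈ LS j' := h ▸ (memLS.2 h1)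
    exact (D_inc k j').1 (memLS.1 h2)
  rcases hd with hd | hd | hd
  · exact hd (key _ (Or.inl rfl))
  · exact hd (key _ (Or.inr (Or.inl rfl)))
  · exact hd (key _ (Or.inr (Or.inr rfl)))

lemma rpPm_inj : Function.Injective (fun k => rp (Pm k)) := by
  intro k k' h
  exact D_P_inj _ _ (rp_inj h)

/-- The configuration. -/
def cfg : PLConfig where
  pts := Set.range (fun k : Fin 42 => rp (Pm k))
  lns := Set.range LS
  pts_finite := Set.finite_range _
  lns_finite := Set.finite_range _
  lns_line := by rintro l ⟨j, rfl⟩; exact LS_isline j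
  lines_meet := by
    rintro l₁ ⟨j₁, rfl⟩ l₂ ⟨j₂, rfl⟩ hne
    exact meet_subsingleton _ (LS_isline j₁) (LS_isline j₂) hne

lemma cfg_pts : cfg.pts = Set.range (fun k : Fin 42 => rp (Pm k)) := rfl
lemma cfg_lns : cfg.lns = Set.range LS := rfl

lemma ncard_range_42 {α : Type*} (f : Fin 42 → α) (hf : Function.Injective f) :
    (Set.range f).ncard = 42 := by
  rw [← Set.image_univ, Set.ncard_image_of_injective _ hf, Set.ncard_univ,
    Nat.card_eq_fintype_card, Fintype.card_fin]

lemma pts_ncard : cfg.pts.ncard = 42 := ncard_range_42 _ rpPm_inj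
lemma lns_ncard : cfg.lns.ncard = 42 := ncard_range_42 _ LS_inj

lemma ncard_triple {α : Type*} {a b c : α} (hab : a ≠ b) (hac : a ≠ c) (hbc : b ≠ c) :
    ({a, b, c} : Set α).ncard = 3 := by
  rw [Set.ncard_insert_of_notMem (by simp [hab, hac]) (Set.toFinite _),
    Set.ncard_insert_of_notMem (by simp [hbc]) (Set.toFinite _), Set.ncard_singleton]

lemma point_valence (k : Fin 42) : cfg.pointValence (rp (Pm k)) = 3 := by
  have hset : {l | l ∈ cfg.lns ∧ rp (Pm k) ∈ l} = LS '' {(Lm k).1, (Lm k).2.1, (Lm k).2.2} := by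
    ext l
    constructor
    · rintro ⟨⟨j, rfl⟩, hmem⟩
      have := (D_TL k j).1 ((D_inc k j).1 (memLS.1 hmem))
      rcases this with h | h | h
      · exact ⟨(Lm k).1, Or.inl rfl, by rw [h]⟩
      · exact ⟨(Lm k).2.1, Or.inr (Or.inl rfl), by rw [h]⟩
      · exact ⟨(Lm k).2.2, Or.inr (Or.inr rfl), by rw [h]⟩
    · rintro ⟨j, hj, rfl⟩
      refine ⟨⟨j, rfl⟩, memLS.2 ((D_inc k j).2 ((D_TL k j).2 ?_))⟩
      rcases hj with h | h | h
      · exact Or.inl (by rw [h])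
      · exact Or.inr (Or.inl (by rw [h]))
      · exact Or.inr (Or.inr (by rw [h]))
  show {l | l ∈ cfg.lns ∧ rp (Pm k) ∈ l}.ncard = 3
  rw [hset, Set.ncard_image_of_injective _ LS_inj]
  have h1 := (D_L_sorted k).1
  have h2 := (D_L_sorted k).2
  exact ncard_triple h1.ne (h1.trans h2).ne h2.ne

lemma line_valence (j : Fin 42) : cfg.lineValence (LS j) = 3 := by
  have hset : cfg.pts ∩ LS j = (fun k => rp (Pm k)) '' {(Tm j).1, (Tm j).2.1, (Tm j).2.2} := by
    ext x
    constructor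
    · rintro ⟨⟨k, rfl⟩, hmem⟩
      have := (D_inc k j).1 (memLS.1 hmem)
      rcases this with h | h | h
      · exact ⟨(Tm j).1, Or.inl rfl, by rw [← h]⟩
      · exact ⟨(Tm j).2.1, Or.inr (Or.inl rfl), by rw [← h]⟩
      · exact ⟨(Tm j).2.2, Or.inr (Or.inr rfl), by rw [← h]⟩
    · rintro ⟨k, hk, rfl⟩
      refine ⟨⟨k, rfl⟩, memLS.2 ((D_inc k j).2 ?_)⟩
      rcases hk with h | h | h
      · exact Or.inl (by rw [h])
      · exact Or.inr (Or.inl (by rw [h]))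
      · exact Or.inr (Or.inr (by rw [h]))
  show (cfg.pts ∩ LS j).ncard = 3
  rw [hset, Set.ncard_image_of_injective _ rpPm_inj]
  have h1 := (D_T_sorted j).1
  have h2 := (D_T_sorted j).2
  exact ncard_triple h1.ne (h1.trans h2).ne h2.ne

lemma cfg_balanced : cfg.IsBalanced 42 3 := by
  refine ⟨pts_ncard, lns_ncard, ?_, ?_⟩
  · rintro p ⟨k, rfl⟩
    exact point_valence k
  · rintro l ⟨j, rfl⟩
    exact line_valence j

/-! ### Connectivity -/

def RT (c : E3 ⊕ Set E3) : Prop :=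
  Relation.ReflTransGen cfg.LeviAdj (Sum.inl (rp (Pm 0))) c

lemma adjPL {k j : Fin 42} (h : inc k j) :
    cfg.LeviAdj (Sum.inl (rp (Pm k))) (Sum.inr (LS j)) :=
  ⟨⟨k, rfl⟩, ⟨j, rfl⟩, memLS.2 h⟩

lemma adjLP {k j : Fin 42} (h : inc k j) :
    cfg.LeviAdj (Sum.inr (LS j)) (Sum.inl (rp (Pm k))) :=
  ⟨⟨k, rfl⟩, ⟨j, rfl⟩, memLS.2 h⟩

set_option maxHeartbeats 2000000 in
lemma reach_all : ∀ c, cfg.LeviVert c → RT c := by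
  have hp0 : RT (Sum.inl (rp (Pm 0))) := Relation.ReflTransGen.refl
  have hl2 : RT (Sum.inr (LS 2)) := hp0.tail (adjPL (k := 0) (j := 2) (by decide))
  have hl6 : RT (Sum.inr (LS 6)) := hp0.tail (adjPL (k := 0) (j := 6) (by decide))
  have hl10 : RT (Sum.inr (LS 10)) := hp0.tail (adjPL (k := 0) (j := 10) (by decide))
  have hp2 : RT (Sum.inl (rp (Pm 2))) := hl2.tail (adjLP (k := 2) (j := 2) (by decide))
  have hp18 : RT (Sum.inl (rp (Pm 18))) := hl2.tail (adjLP (k := 18) (j := 2) (by decide))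
  have hp5 : RT (Sum.inl (rp (Pm 5))) := hl6.tail (adjLP (k := 5) (j := 6) (by decide))
  have hp31 : RT (Sum.inl (rp (Pm 31))) := hl6.tail (adjLP (k := 31) (j := 6) (by decide))
  have hp6 : RT (Sum.inl (rp (Pm 6))) := hl10.tail (adjLP (k := 6) (j := 10) (by decide))
  have hp35 : RT (Sum.inl (rp (Pm 35))) := hl10.tail (adjLP (k := 35) (j := 10) (by decide))
  have hl12 : RT (Sum.inr (LS 12)) := hp2.tail (adjPL (k := 2) (j := 12) (by decide))
  have hl29 : RT (Sum.inr (LS 29)) := hp2.tail (adjPL (k := 2) (j := 29) (by decide))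
  have hl25 : RT (Sum.inr (LS 25)) := hp18.tail (adjPL (k := 18) (j := 25) (by decide))
  have hl40 : RT (Sum.inr (LS 40)) := hp18.tail (adjPL (k := 18) (j := 40) (by decide))
  have hl16 : RT (Sum.inr (LS 16)) := hp5.tail (adjPL (k := 5) (j := 16) (by decide))
  have hl21 : RT (Sum.inr (LS 21)) := hp5.tail (adjPL (k := 5) (j := 21) (by decide))
  have hl28 : RT (Sum.inr (LS 28)) := hp31.tail (adjPL (k := 31) (j := 28) (by decide))
  have hl34 : RT (Sum.inr (LS 34)) := hp31.tail (adjPL (k := 31) (j := 34) (by decide))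
  have hl15 : RT (Sum.inr (LS 15)) := hp6.tail (adjPL (k := 6) (j := 15) (by decide))
  have hl24 : RT (Sum.inr (LS 24)) := hp6.tail (adjPL (k := 6) (j := 24) (by decide))
  have hl19 : RT (Sum.inr (LS 19)) := hp35.tail (adjPL (k := 35) (j := 19) (by decide))
  have hl37 : RT (Sum.inr (LS 37)) := hp35.tail (adjPL (k := 35) (j := 37) (by decide))
  have hp3 : RT (Sum.inl (rp (Pm 3))) := hl12.tail (adjLP (k := 3) (j := 12) (by decide))
  have hp4 : RT (Sum.inl (rp (Pm 4))) := hl12.tail (adjLP (k := 4) (j := 12) (by decide))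
  have hp7 : RT (Sum.inl (rp (Pm 7))) := hl29.tail (adjLP (k := 7) (j := 29) (by decide))
  have hp15 : RT (Sum.inl (rp (Pm 15))) := hl29.tail (adjLP (k := 15) (j := 29) (by decide))
  have hp12 : RT (Sum.inl (rp (Pm 12))) := hl25.tail (adjLP (k := 12) (j := 25) (by decide))
  have hp25 : RT (Sum.inl (rp (Pm 25))) := hl40.tail (adjLP (k := 25) (j := 40) (by decide))
  have hp38 : RT (Sum.inl (rp (Pm 38))) := hl40.tail (adjLP (k := 38) (j := 40) (by decide))
  have hp19 : RT (Sum.inl (rp (Pm 19))) := hl16.tail (adjLP (k := 19) (j := 16) (by decide))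
  have hp27 : RT (Sum.inl (rp (Pm 27))) := hl16.tail (adjLP (k := 27) (j := 16) (by decide))
  have hp9 : RT (Sum.inl (rp (Pm 9))) := hl21.tail (adjLP (k := 9) (j := 21) (by decide))
  have hp29 : RT (Sum.inl (rp (Pm 29))) := hl28.tail (adjLP (k := 29) (j := 28) (by decide))
  have hp22 : RT (Sum.inl (rp (Pm 22))) := hl34.tail (adjLP (k := 22) (j := 34) (by decide))
  have hp20 : RT (Sum.inl (rp (Pm 20))) := hl15.tail (adjLP (k := 20) (j := 15) (by decide))
  have hp33 : RT (Sum.inl (rp (Pm 33))) := hl15.tail (adjLP (k := 33) (j := 15) (by decide))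
  have hp8 : RT (Sum.inl (rp (Pm 8))) := hl24.tail (adjLP (k := 8) (j := 24) (by decide))
  have hp34 : RT (Sum.inl (rp (Pm 34))) := hl19.tail (adjLP (k := 34) (j := 19) (by decide))
  have hp21 : RT (Sum.inl (rp (Pm 21))) := hl37.tail (adjLP (k := 21) (j := 37) (by decide))
  have hl32 : RT (Sum.inr (LS 32)) := hp3.tail (adjPL (k := 3) (j := 32) (by decide))
  have hl36 : RT (Sum.inr (LS 36)) := hp3.tail (adjPL (k := 3) (j := 36) (by decide))
  have hl4 : RT (Sum.inr (LS 4)) := hp4.tail (adjPL (k := 4) (j := 4) (by decide))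
  have hl41 : RT (Sum.inr (LS 41)) := hp15.tail (adjPL (k := 15) (j := 41) (by decide))
  have hl22 : RT (Sum.inr (LS 22)) := hp12.tail (adjPL (k := 12) (j := 22) (by decide))
  have hl26 : RT (Sum.inr (LS 26)) := hp12.tail (adjPL (k := 12) (j := 26) (by decide))
  have hl17 : RT (Sum.inr (LS 17)) := hp38.tail (adjPL (k := 38) (j := 17) (by decide))
  have hl30 : RT (Sum.inr (LS 30)) := hp19.tail (adjPL (k := 19) (j := 30) (by decide))
  have hl35 : RT (Sum.inr (LS 35)) := hp19.tail (adjPL (k := 19) (j := 35) (by decide))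
  have hl11 : RT (Sum.inr (LS 11)) := hp27.tail (adjPL (k := 27) (j := 11) (by decide))
  have hl39 : RT (Sum.inr (LS 39)) := hp9.tail (adjPL (k := 9) (j := 39) (by decide))
  have hl20 : RT (Sum.inr (LS 20)) := hp29.tail (adjPL (k := 29) (j := 20) (by decide))
  have hl23 : RT (Sum.inr (LS 23)) := hp29.tail (adjPL (k := 29) (j := 23) (by decide))
  have hl13 : RT (Sum.inr (LS 13)) := hp22.tail (adjPL (k := 22) (j := 13) (by decide))
  have hl31 : RT (Sum.inr (LS 31)) := hp20.tail (adjPL (k := 20) (j := 31) (by decide))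
  have hl33 : RT (Sum.inr (LS 33)) := hp20.tail (adjPL (k := 20) (j := 33) (by decide))
  have hl9 : RT (Sum.inr (LS 9)) := hp33.tail (adjPL (k := 33) (j := 9) (by decide))
  have hl38 : RT (Sum.inr (LS 38)) := hp8.tail (adjPL (k := 8) (j := 38) (by decide))
  have hl18 : RT (Sum.inr (LS 18)) := hp34.tail (adjPL (k := 34) (j := 18) (by decide))
  have hl27 : RT (Sum.inr (LS 27)) := hp34.tail (adjPL (k := 34) (j := 27) (by decide))
  have hl14 : RT (Sum.inr (LS 14)) := hp21.tail (adjPL (k := 21) (j := 14) (by decide))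
  have hp17 : RT (Sum.inl (rp (Pm 17))) := hl32.tail (adjLP (k := 17) (j := 32) (by decide))
  have hp26 : RT (Sum.inl (rp (Pm 26))) := hl32.tail (adjLP (k := 26) (j := 32) (by decide))
  have hp16 : RT (Sum.inl (rp (Pm 16))) := hl36.tail (adjLP (k := 16) (j := 36) (by decide))
  have hp23 : RT (Sum.inl (rp (Pm 23))) := hl36.tail (adjLP (k := 23) (j := 36) (by decide))
  have hp1 : RT (Sum.inl (rp (Pm 1))) := hl4.tail (adjLP (k := 1) (j := 4) (by decide))
  have hp24 : RT (Sum.inl (rp (Pm 24))) := hl41.tail (adjLP (k := 24) (j := 41) (by decide))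
  have hp10 : RT (Sum.inl (rp (Pm 10))) := hl22.tail (adjLP (k := 10) (j := 22) (by decide))
  have hp14 : RT (Sum.inl (rp (Pm 14))) := hl22.tail (adjLP (k := 14) (j := 22) (by decide))
  have hp11 : RT (Sum.inl (rp (Pm 11))) := hl26.tail (adjLP (k := 11) (j := 26) (by decide))
  have hp13 : RT (Sum.inl (rp (Pm 13))) := hl26.tail (adjLP (k := 13) (j := 26) (by decide))
  have hp37 : RT (Sum.inl (rp (Pm 37))) := hl17.tail (adjLP (k := 37) (j := 17) (by decide))
  have hp39 : RT (Sum.inl (rp (Pm 39))) := hl17.tail (adjLP (k := 39) (j := 17) (by decide))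
  have hp32 : RT (Sum.inl (rp (Pm 32))) := hl35.tail (adjLP (k := 32) (j := 35) (by decide))
  have hp40 : RT (Sum.inl (rp (Pm 40))) := hl11.tail (adjLP (k := 40) (j := 11) (by decide))
  have hp28 : RT (Sum.inl (rp (Pm 28))) := hl23.tail (adjLP (k := 28) (j := 23) (by decide))
  have hp30 : RT (Sum.inl (rp (Pm 30))) := hl23.tail (adjLP (k := 30) (j := 23) (by decide))
  have hp36 : RT (Sum.inl (rp (Pm 36))) := hl13.tail (adjLP (k := 36) (j := 13) (by decide))
  have hp41 : RT (Sum.inl (rp (Pm 41))) := hl9.tail (adjLP (k := 41) (j := 9) (by decide))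
  have hl7 : RT (Sum.inr (LS 7)) := hp26.tail (adjPL (k := 26) (j := 7) (by decide))
  have hl3 : RT (Sum.inr (LS 3)) := hp23.tail (adjPL (k := 23) (j := 3) (by decide))
  have hl1 : RT (Sum.inr (LS 1)) := hp1.tail (adjPL (k := 1) (j := 1) (by decide))
  have hl8 : RT (Sum.inr (LS 8)) := hp1.tail (adjPL (k := 1) (j := 8) (by decide))
  have hl5 : RT (Sum.inr (LS 5)) := hp10.tail (adjPL (k := 10) (j := 5) (by decide))
  have hl0 : RT (Sum.inr (LS 0)) := hp11.tail (adjPL (k := 11) (j := 0) (by decide))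

  rintro (p | l) hc
  · have hc' : p ∈ Set.range (fun k : Fin 42 => rp (Pm k)) := hc
    obtain ⟨k, rfl⟩ := hc'
    fin_cases k <;> assumption
  · have hc' : l ∈ Set.range LS := hc
    obtain ⟨j, rfl⟩ := hc'
    fin_cases j <;> assumption

lemma levi_symm : Symmetric cfg.LeviAdj := by
  rintro (p | l) (p' | l') h
  · exact h.elim
  · exact h
  · exact h
  · exact h.elim

lemma cfg_connected : cfg.Connected := by
  intro a b ha hb
  haveI : Std.Symm cfg.LeviAdj := ⟨fun x y h => levi_symm h⟩
  have hs : Std.Symm (Relation.ReflTransGen cfg.LeviAdj) := inferInstance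
  exact (hs.symm _ _ (reach_all a ha)).trans (reach_all b hb)

end Aux

/-! ### Symmetry -/

section Sym
set_option maxRecDepth 40000

lemma g0_eq_zero {g : E3 ≃ᵢ E3} {n : ℕ} (hn : n ≠ 0) (ptsf : Fin n → E3)
    (hinj : Function.Injective ptsf)
    (hsum : (Finset.univ.sum ptsf) = 0)
    (himg : g '' Set.range ptsf = Set.range ptsf) : g 0 = 0 := by
  have hθ : ∀ k, ∃ k', g (ptsf k) = ptsf k' := by
    intro k
    have hmem : g (ptsf k) ∈ Set.range ptsf := by
      rw [← himg]; exact ⟨ptsf k, ⟨k, rfl⟩, rfl⟩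
    obtain ⟨k', hk'⟩ := hmem
    exact ⟨k', hk'.symm⟩
  choose θ hθ using hθ
  have hθinj : Function.Injective θ := by
    intro a b h
    apply hinj
    apply g.injective
    rw [hθ a, hθ b, h]
  have hbij : Function.Bijective θ := Finite.injective_iff_bijective.mp hθinj
  have hsum2 : (Finset.univ.sum fun k => g (ptsf k)) = 0 := by
    have h1 : (Finset.univ.sum fun k => g (ptsf k)) = Finset.univ.sum fun k => ptsf (θ k) :=
      Finset.sum_congr rfl fun k _ => hθ k
    rw [h1, Fintype.sum_bijective θ hbij _ ptsf (fun k => rfl), hsum]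
  have hgx : ∀ x, g x = g.toRealLinearIsometryEquiv x + g 0 := by
    intro x
    rw [IsometryEquiv.toRealLinearIsometryEquiv_apply]
    abel
  have h2 : (Finset.univ.sum fun k => g (ptsf k)) =
      Finset.univ.sum fun k => (g.toRealLinearIsometryEquiv (ptsf k) + g 0) :=
    Finset.sum_congr rfl fun k _ => hgx (ptsf k)
  rw [h2, Finset.sum_add_distrib, Finset.sum_const, ← map_sum, hsum, map_zero, zero_add,
    Finset.card_univ, Fintype.card_fin] at hsum2
  have h3 : (n : ℝ) • g 0 = 0 := by rw [Nat.cast_smul_eq_nsmul]; exact hsum2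
  rcases smul_eq_zero.mp h3 with h | h
  · exact absurd (Nat.cast_eq_zero.mp h) hn
  · exact h

lemma rp_VTm0 : rp (VTm 0) = pt 1 1 1 := by
  show rp ((1:ℤ),(1:ℤ),(1:ℤ)) = pt 1 1 1
  apply E3_ext <;> simp [rp, pt_apply0, pt_apply1, pt_apply2]
lemma rp_VTm1 : rp (VTm 1) = pt 1 (-1) (-1) := by
  show rp ((1:ℤ),(-1:ℤ),(-1:ℤ)) = pt 1 (-1) (-1)
  apply E3_ext <;> simp [rp, pt_apply0, pt_apply1, pt_apply2]
lemma rp_VTm2 : rp (VTm 2) = pt (-1) 1 (-1) := by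
  show rp ((-1:ℤ),(1:ℤ),(-1:ℤ)) = pt (-1) 1 (-1)
  apply E3_ext <;> simp [rp, pt_apply0, pt_apply1, pt_apply2]
lemma rp_VTm3 : rp (VTm 3) = pt (-1) (-1) 1 := by
  show rp ((-1:ℤ),(-1:ℤ),(1:ℤ)) = pt (-1) (-1) 1
  apply E3_ext <;> simp [rp, pt_apply0, pt_apply1, pt_apply2]

lemma VT_eq_range : VT = Set.range (fun i : Fin 4 => rp (VTm i)) := by
  ext x
  simp only [VT, Set.mem_insert_iff, Set.mem_singleton_iff, Set.mem_range]
  constructor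
  · rintro (rfl | rfl | rfl | rfl)
    exacts [⟨0, rp_VTm0⟩, ⟨1, rp_VTm1⟩, ⟨2, rp_VTm2⟩, ⟨3, rp_VTm3⟩]
  · rintro ⟨i, rfl⟩
    fin_cases i
    · exact Or.inl rp_VTm0
    · exact Or.inr (Or.inl rp_VTm1)
    · exact Or.inr (Or.inr (Or.inl rp_VTm2))
    · exact Or.inr (Or.inr (Or.inr rp_VTm3))

lemma norm_rp (q : V3) : ‖rp q‖ = Real.sqrt ((nsq q : ℝ)) := by
  rw [EuclideanSpace.norm_eq]
  congr 1
  rw [Fin.sum_univ_three]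
  simp only [rp, pt_apply0, pt_apply1, pt_apply2, Real.norm_eq_abs, sq_abs, nsq]
  push_cast
  ring

def shell : Set E3 := {p | p ∈ cfg.pts ∧ ‖p‖ = Real.sqrt 3}

lemma shell_eq_VT : shell = VT := by
  ext p
  constructor
  · rintro ⟨⟨k, rfl⟩, hn⟩
    rw [norm_rp] at hn
    have h3 : (nsq (Pm k) : ℝ) = 3 := by
      have hnn : (0:ℝ) ≤ (nsq (Pm k) : ℝ) := by
        have : (0:ℤ) ≤ nsq (Pm k) := by
          exact add_nonneg (add_nonneg (mul_self_nonneg _) (mul_self_nonneg _))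
            (mul_self_nonneg _)
        exact_mod_cast this
      rwa [Real.sqrt_inj hnn (by norm_num)] at hn
    have h4 : nsq (Pm k) = 3 := by exact_mod_cast h3
    rw [VT_eq_range]
    rcases (D_shell k).1 h4 with rfl | rfl | rfl | rfl
    · exact ⟨3, congrArg rp D_VT_P.2.2.2.symm⟩
    · exact ⟨2, congrArg rp D_VT_P.2.2.1.symm⟩
    · exact ⟨1, congrArg rp D_VT_P.2.1.symm⟩
    · exact ⟨0, congrArg rp D_VT_P.1.symm⟩
  · intro hp
    rw [VT_eq_range] at hp
    obtain ⟨i, rfl⟩ := hp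
    refine ⟨?_, ?_⟩
    · fin_cases i
      · exact ⟨25, congrArg rp D_VT_P.1⟩
      · exact ⟨24, congrArg rp D_VT_P.2.1⟩
      · exact ⟨17, congrArg rp D_VT_P.2.2.1⟩
      · exact ⟨16, congrArg rp D_VT_P.2.2.2⟩
    · rw [norm_rp, D_VT_nsq i]
      norm_num

lemma image_shell {g : E3 ≃ᵢ E3} (hg0 : g 0 = 0) (hpts : g '' cfg.pts = cfg.pts) :
    g '' shell = shell := by
  have hnorm : ∀ x : E3, ‖g x‖ = ‖x‖ := by
    intro x
    calc ‖g x‖ = dist (g x) (g 0) := by rw [hg0, dist_zero_right]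
    _ = dist x 0 := g.dist_eq x 0
    _ = ‖x‖ := dist_zero_right x
  ext y
  constructor
  · rintro ⟨x, ⟨hx1, hx2⟩, rfl⟩
    exact ⟨(by rw [← hpts]; exact Set.mem_image_of_mem g hx1), by rw [hnorm]; exact hx2⟩
  · rintro ⟨hy1, hy2⟩
    rw [← hpts] at hy1
    obtain ⟨x, hx, rfl⟩ := hy1
    exact ⟨x, ⟨hx, by rw [← hnorm x]; exact hy2⟩, rfl⟩

lemma sum_rp_Pm : (Finset.univ.sum fun k : Fin 42 => rp (Pm k)) = 0 := by
  show (Finset.univ.sum fun k : Fin 42 => rpHom (Pm k)) = 0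
  rw [← map_sum, D_sum, map_zero]

lemma sum_rp_VTm : (Finset.univ.sum fun i : Fin 4 => rp (VTm i)) = 0 := by
  show (Finset.univ.sum fun i : Fin 4 => rpHom (VTm i)) = 0
  rw [← map_sum, D_VT_sum, map_zero]

lemma VT_of_preserved {g : E3 ≃ᵢ E3} (h : Preserves g cfg) : g '' VT = VT := by
  obtain ⟨hpts, hlns⟩ := h
  have hg0 : g 0 = 0 :=
    g0_eq_zero (n := 42) (by norm_num) (fun k => rp (Pm k)) rpPm_inj sum_rp_Pm hpts
  rw [← shell_eq_VT]
  exact image_shell hg0 hpts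

lemma rp_two_decomp (q : V3) : (2:ℝ) • rp q =
    ((q.1 + q.2.1 : ℤ) : ℝ) • rp (VTm 0) + ((q.1 - q.2.2 : ℤ) : ℝ) • rp (VTm 1) +
    ((q.2.1 - q.2.2 : ℤ) : ℝ) • rp (VTm 2) := by
  obtain ⟨a, b, c⟩ := q
  rw [show VTm 0 = ((1:ℤ),(1:ℤ),(1:ℤ)) from rfl, show VTm 1 = ((1:ℤ),(-1:ℤ),(-1:ℤ)) from rfl,
    show VTm 2 = ((-1:ℤ),(1:ℤ),(-1:ℤ)) from rfl]
  apply E3_ext <;>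
    simp only [rp, add_apply', smul_apply', pt_apply0, pt_apply1, pt_apply2] <;>
    push_cast <;> ring

lemma rp_Mq2 (u1 u2 u3 q : V3) : rp (Mq2 u1 u2 u3 q) =
    ((q.1 + q.2.1 : ℤ) : ℝ) • rp u1 + ((q.1 - q.2.2 : ℤ) : ℝ) • rp u2 +
    ((q.2.1 - q.2.2 : ℤ) : ℝ) • rp u3 := by
  apply E3_ext <;>
    simp only [rp, Mq2, vadd3, zs, add_apply', smul_apply', pt_apply0, pt_apply1, pt_apply2] <;>
    push_cast <;> ring

lemma rp_dbl (v : V3) : rp (dbl v) = (2:ℝ) • rp v := by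
  apply E3_ext <;>
    simp only [rp, dbl, smul_apply', pt_apply0, pt_apply1, pt_apply2] <;>
    push_cast <;> ring

lemma key_eq {g : E3 ≃ᵢ E3} (hg0 : g 0 = 0) (t : Fin 24)
    (h1 : g (rp (VTm 0)) = rp (VTm (trips t).1))
    (h2 : g (rp (VTm 1)) = rp (VTm (trips t).2.1))
    (h3 : g (rp (VTm 2)) = rp (VTm (trips t).2.2)) :
    ∀ q : V3, (2:ℝ) • g (rp q) = rp (Mt t q) := by
  intro q
  have hFg : ∀ x, (g.toRealLinearIsometryEquivOfMapZero hg0) x = g x := fun x =>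
    congrFun (IsometryEquiv.coe_toRealLinearIsometryEquivOfMapZero g hg0) x
  set F := g.toRealLinearIsometryEquivOfMapZero hg0 with hF
  calc (2:ℝ) • g (rp q) = F ((2:ℝ) • rp q) := by rw [map_smul, hFg]
  _ = F (((q.1 + q.2.1 : ℤ) : ℝ) • rp (VTm 0) + ((q.1 - q.2.2 : ℤ) : ℝ) • rp (VTm 1) +
      ((q.2.1 - q.2.2 : ℤ) : ℝ) • rp (VTm 2)) := by rw [rp_two_decomp]
  _ = ((q.1 + q.2.1 : ℤ) : ℝ) • F (rp (VTm 0)) + ((q.1 - q.2.2 : ℤ) : ℝ) • F (rp (VTm 1)) +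
      ((q.2.1 - q.2.2 : ℤ) : ℝ) • F (rp (VTm 2)) := by
    rw [map_add, map_add, map_smul, map_smul, map_smul]
  _ = ((q.1 + q.2.1 : ℤ) : ℝ) • rp (VTm (trips t).1) + ((q.1 - q.2.2 : ℤ) : ℝ) • rp (VTm (trips t).2.1) +
      ((q.2.1 - q.2.2 : ℤ) : ℝ) • rp (VTm (trips t).2.2) := by
    rw [hFg, hFg, hFg, h1, h2, h3]
  _ = rp (Mt t q) := (rp_Mq2 _ _ _ q).symm

lemma preserved_of_VT {g : E3 ≃ᵢ E3} (hVT : g '' VT = VT) : Preserves g cfg := by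
  have hg0 : g 0 = 0 := by
    apply g0_eq_zero (n := 4) (by norm_num) (fun i => rp (VTm i))
      (fun a b h => D_VT_inj a b (rp_inj h)) sum_rp_VTm
    rw [← VT_eq_range]
    exact hVT
  have hmem : ∀ i : Fin 4, ∃ i' : Fin 4, g (rp (VTm i)) = rp (VTm i') := by
    intro i
    have hmm : g (rp (VTm i)) ∈ VT := by
      rw [← hVT]
      exact Set.mem_image_of_mem g (by rw [VT_eq_range]; exact ⟨i, rfl⟩)
    rw [VT_eq_range] at hmm
    obtain ⟨i', h⟩ := hmm
    exact ⟨i', h.symm⟩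
  obtain ⟨u1, hu1⟩ := hmem 0
  obtain ⟨u2, hu2⟩ := hmem 1
  obtain ⟨u3, hu3⟩ := hmem 2
  have hne12 : u1 ≠ u2 := by
    intro h
    exact absurd (D_VT_inj _ _ (rp_inj (g.injective (by rw [hu1, hu2, h]))))
      (by decide : (0 : Fin 4) ≠ 1)
  have hne13 : u1 ≠ u3 := by
    intro h
    exact absurd (D_VT_inj _ _ (rp_inj (g.injective (by rw [hu1, hu3, h]))))
      (by decide : (0 : Fin 4) ≠ 2)
  have hne23 : u2 ≠ u3 := by
    intro h
    exact absurd (D_VT_inj _ _ (rp_inj (g.injective (by rw [hu2, hu3, h]))))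
      (by decide : (1 : Fin 4) ≠ 2)
  obtain ⟨t, ht⟩ := D_trips_cover u1 u2 u3 hne12 hne13 hne23
  have key := key_eq hg0 t (by rw [ht]; exact hu1) (by rw [ht]; exact hu2) (by rw [ht]; exact hu3)
  have hpt : ∀ k, g (rp (Pm k)) = rp (Pm (permP t k)) := by
    intro k
    have h2 : (2:ℝ) • g (rp (Pm k)) = (2:ℝ) • rp (Pm (permP t k)) := by
      rw [key (Pm k), D_permP t k, rp_dbl]
    exact smul_right_injective E3 (by norm_num : (2:ℝ) ≠ 0) h2
  constructor
  · -- points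
    apply Set.eq_of_subset_of_ncard_le
    · rintro y ⟨x, ⟨k, rfl⟩, rfl⟩
      exact ⟨permP t k, (hpt k).symm⟩
    · rw [Set.ncard_image_of_injective _ g.injective]
    · exact cfg.pts_finite
  · -- lines
    rintro l ⟨j, rfl⟩
    obtain ⟨hMD_ne, hcross1, hcross2⟩ := D_permL t j
    set j' := permL t j with hj'
    obtain ⟨s₀, hs₀⟩ : rp (Mt t (Dm j)) ∈ lset 0 (Dm j') :=
      (mem_lset_iff (D_D_ne j')).2 (by simpa using hcross1)
    rw [rp_zero, zero_add] at hs₀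
    have hs₀ne : s₀ ≠ 0 := by
      intro h
      exact rp_ne_zero hMD_ne (by rw [hs₀, h, zero_smul])
    obtain ⟨u₀, hu₀⟩ : rp (Mt t (Bm j)) ∈ lset (dbl (Bm j')) (Dm j') :=
      (mem_lset_iff (D_D_ne j')).2 hcross2
    have hFg : ∀ x, (g.toRealLinearIsometryEquivOfMapZero hg0) x = g x := fun x =>
      congrFun (IsometryEquiv.coe_toRealLinearIsometryEquivOfMapZero g hg0) x
    set F := g.toRealLinearIsometryEquivOfMapZero hg0 with hF
    have hlin : ∀ (s : ℝ), g (rp (Bm j) + s • rp (Dm j)) = g (rp (Bm j)) + s • g (rp (Dm j)) := by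
      intro s
      calc g (rp (Bm j) + s • rp (Dm j)) = F (rp (Bm j) + s • rp (Dm j)) := (hFg _).symm
      _ = F (rp (Bm j)) + s • F (rp (Dm j)) := by rw [map_add, map_smul]
      _ = g (rp (Bm j)) + s • g (rp (Dm j)) := by rw [hFg, hFg]
    have himg : g '' LS j = {x : E3 | ∃ s : ℝ, x = g (rp (Bm j)) + s • g (rp (Dm j))} := by
      ext x
      constructor
      · rintro ⟨y, ⟨s, rfl⟩, rfl⟩
        exact ⟨s, hlin s⟩
      · rintro ⟨s, rfl⟩
        exact ⟨rp (Bm j) + s • rp (Dm j), ⟨s, rfl⟩, hlin s⟩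
    have hgB : g (rp (Bm j)) = rp (Bm j') + (u₀ / 2) • rp (Dm j') := by
      have h2 : (2:ℝ) • g (rp (Bm j)) = (2:ℝ) • (rp (Bm j') + (u₀ / 2) • rp (Dm j')) := by
        rw [key (Bm j), hu₀, rp_dbl]
        match_scalars <;> field_simp
      exact smul_right_injective E3 (by norm_num : (2:ℝ) ≠ 0) h2
    have hgD : g (rp (Dm j)) = (s₀ / 2) • rp (Dm j') := by
      have h2 : (2:ℝ) • g (rp (Dm j)) = (2:ℝ) • ((s₀ / 2) • rp (Dm j')) := by
        rw [key (Dm j), hs₀]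
        match_scalars <;> field_simp
      exact smul_right_injective E3 (by norm_num : (2:ℝ) ≠ 0) h2
    have hfin : g '' LS j = LS j' := by
      rw [himg]
      exact lset_param (D_D_ne j') (div_ne_zero hs₀ne (by norm_num)) hgD hgB
    exact ⟨j', hfin.symm⟩

end Sym

/-- Problem 2 of the paper: a connected (42_3) configuration of points and lines in ℝ³ whose symmetry group is the full symmetry group of the regular tetrahedron. -/
theorem tetrahedral_full_42_3 :
    ∃ Z : PLConfig, Z.IsBalanced 42 3 ∧ Z.Connected ∧
      ∀ g : E3 ≃ᵢ E3, Preserves g Z ↔ (g '' VT = VT) := by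
  exact ⟨cfg, cfg_balanced, cfg_connected, fun g => ⟨VT_of_preserved, preserved_of_VT⟩⟩
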